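/- arXiv:2210.08418 — 3 statements merged into one kernel-verified Lean document; each statement's English description precedes it below -/
import Mathlib

section
/- Let R be a commutative ring, d ≥ 1, and let X, Y : (ZMod d) × (ZMod d) → R be d×d matrices with cyclically indexed entries. Define the permutations σ(X)_{i,j} = X_{i, i+j}, τ(Y)_{i,j} = Y_{i+j, j}, φ(X)_{i,j} = X_{i, j+1} and ψ(Y)_{i,j} = Y_{i+1, j}, where all index arithmetic is modulo d. Then the matrix product satisfies X∗Y = Σ_{k=0}^{d−1} (φ^k(σ(X))) ⊙ (ψ^k(τ(Y))), i.e. for all i, j ∈ ZMod d: Σ_{m ∈ ZMod d} X_{i,m}·Y_{m,j} = Σ_{k=0}^{d−1} (φ^k(σ(X)))_{i,j} · (ψ^k(τ(Y)))_{i,j}. -/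
/-- The permutation `σ(X)_{i,j} = X_{i,i+j}` (indices mod d). -/
def sigmaPerm {R : Type*} {d : ℕ} (X : ZMod d → ZMod d → R) : ZMod d → ZMod d → R :=
  fun i j => X i (i + j)

/-- The permutation `τ(Y)_{i,j} = Y_{i+j,j}` (indices mod d). -/
def tauPerm {R : Type*} {d : ℕ} (Y : ZMod d → ZMod d → R) : ZMod d → ZMod d → R :=
  fun i j => Y (i + j) j

/-- The column rotation `φ(X)_{i,j} = X_{i,j+1}` (indices mod d). -/
def phiPerm {R : Type*} {d : ℕ} (X : ZMod d → ZMod d → R) : ZMod d → ZMod d → R :=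
  fun i j => X i (j + 1)

/-- The row rotation `ψ(Y)_{i,j} = Y (i+1) j` (indices mod d). -/
def psiPerm {R : Type*} {d : ℕ} (Y : ZMod d → ZMod d → R) : ZMod d → ZMod d → R :=
  fun i j => Y (i + 1) j

lemma phiPerm_iterate {R : Type*} {d : ℕ} (X : ZMod d → ZMod d → R) (k : ℕ) (i j : ZMod d) :
    (phiPerm^[k] X) i j = X i (j + k) := by
  induction k generalizing j with
  | zero => simp
  | succ n ih =>
      rw [Function.iterate_succ_apply', phiPerm, ih]
      push_cast; ring_nf

lemma psiPerm_iterate {R : Type*} {d : ℕ} (Y : ZMod d → ZMod d → R) (k : ℕ) (i j : ZMod d) :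
    (psiPerm^[k] Y) i j = Y (i + k) j := by
  induction k generalizing i with
  | zero => simp
  | succ n ih =>
      rw [Function.iterate_succ_apply', psiPerm, ih]
      push_cast; ring_nf

/-- Parallel matrix multiplication identity:
`X∗Y = Σ_{k=0}^{d−1} (φ^k(σ(X))) ⊙ (ψ^k(τ(Y)))`, entrywise. -/
theorem stmt_3 {R : Type*} [CommRing R] (d : ℕ) [NeZero d]
    (X Y : ZMod d → ZMod d → R) (i j : ZMod d) :
    ∑ m : ZMod d, X i m * Y m j
      = ∑ k ∈ Finset.range d,
          (phiPerm^[k] (sigmaPerm X)) i j * (psiPerm^[k] (tauPerm Y)) i j := by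
  have h : ∀ k : ℕ,
      (phiPerm^[k] (sigmaPerm X)) i j * (psiPerm^[k] (tauPerm Y)) i j
        = X i (i + j + k) * Y (i + j + k) j := by
    intro k
    rw [phiPerm_iterate, psiPerm_iterate]
    simp [sigmaPerm, tauPerm, add_assoc, add_comm, add_left_comm]
  simp only [h]
  have step1 : ∑ m : ZMod d, X i m * Y m j
      = ∑ m : ZMod d, X i (i + j + m) * Y (i + j + m) j :=
    (Fintype.sum_equiv (Equiv.addLeft (i + j)) _ _ (fun m => rfl)).symm
  rw [step1]
  refine Finset.sum_nbij' (fun m => m.val) (fun k => (k : ZMod d)) ?_ ?_ ?_ ?_ ?_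
  · intro m _; exact Finset.mem_range.mpr (ZMod.val_lt m)
  · intro k _; exact Finset.mem_univ _
  · intro m _; exact ZMod.natCast_zmod_val m
  · intro k hk; exact ZMod.val_natCast_of_lt (Finset.mem_range.mp hk)
  · intro m _; rw [ZMod.natCast_zmod_val]
end

section
/- Let p be a prime and α = α₀ + α₁ in 𝔽_p. Let X ∈ 𝔽_p^{d₁×d₂}, y ∈ 𝔽_p^{d₂} and z = X∗y, with MAC shares satisfying ⟨αX⟩₀ + ⟨αX⟩₁ = α·X (entrywise), ⟨αy⟩₀ + ⟨αy⟩₁ = α·y and ⟨αz⟩₀ + ⟨αz⟩₁ = α·z. For arbitrary A ∈ 𝔽_p^{d₁×d₂} and b ∈ 𝔽_p^{d₂}, define for each party index b' ∈ {0,1} the vector ⟨αe⟩_{b'} = α_{b'}·((A−X)∗(b−y)) + ⟨αX⟩_{b'}∗(b−y) + (A−X)∗⟨αy⟩_{b'} + ⟨αz⟩_{b'}. Then ⟨αe⟩₀ + ⟨αe⟩₁ = α·(A∗b); i.e., the parties locally obtain valid MAC shares of the matrix–vector product A∗b. -/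
/-- MAC-share reconstruction for an authenticated matrix–vector triple: with
`α = α₀+α₁`, `z = X∗y`, and MAC shares of `α·X`, `α·y`, `α·z`, the locally
computed vectors `⟨αe⟩_b = α_b((A−X)∗(b−y)) + ⟨αX⟩_b∗(b−y) + (A−X)∗⟨αy⟩_b + ⟨αz⟩_b`
satisfy `⟨αe⟩₀ + ⟨αe⟩₁ = α·(A∗b)`. -/
theorem stmt_14 (p : ℕ) [Fact p.Prime] {d₁ d₂ : ℕ} (α α₀ α₁ : ZMod p)
    (hα : α = α₀ + α₁)
    (X A αX₀ αX₁ : Matrix (Fin d₁) (Fin d₂) (ZMod p))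
    (y bb αy₀ αy₁ : Fin d₂ → ZMod p)
    (z αz₀ αz₁ : Fin d₁ → ZMod p)
    (hz : z = X.mulVec y)
    (hαX : αX₀ + αX₁ = α • X)
    (hαy : αy₀ + αy₁ = α • y)
    (hαz : αz₀ + αz₁ = α • z) :
    (α₀ • ((A - X).mulVec (bb - y)) + αX₀.mulVec (bb - y) + (A - X).mulVec αy₀ + αz₀)
      + (α₁ • ((A - X).mulVec (bb - y)) + αX₁.mulVec (bb - y) + (A - X).mulVec αy₁ + αz₁)
      = α • A.mulVec bb := by
  have h : (α₀ • ((A - X).mulVec (bb - y)) + αX₀.mulVec (bb - y) + (A - X).mulVec αy₀ + αz₀)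
      + (α₁ • ((A - X).mulVec (bb - y)) + αX₁.mulVec (bb - y) + (A - X).mulVec αy₁ + αz₁)
      = α • ((A - X).mulVec (bb - y)) + (αX₀ + αX₁).mulVec (bb - y)
        + (A - X).mulVec (αy₀ + αy₁) + (αz₀ + αz₁) := by
    rw [hα, Matrix.add_mulVec, Matrix.mulVec_add, add_smul]
    abel
  rw [h, hαX, hαy, hαz, hz]
  simp only [Matrix.sub_mulVec, Matrix.mulVec_sub, Matrix.smul_mulVec,
    Matrix.mulVec_smul, smul_sub]
  abel
end

section
/- Let p be a prime, α ∈ 𝔽_p, and let X = X₀ + X₁ and Y = Y₀ + Y₁ be input- and kernel-shaped tensors over 𝔽_p, with reshaped matrices X' (rows indexed by output positions (i,j), columns by (shift, input-channel) triples, X'_{(i,j),(Δi,Δj,k)} = X_{(i+Δi,j+Δj),k}) and Y' (Y'_{(Δi,Δj,k),k'} = Y_{(Δi,Δj),k,k'}). Let ⟨Z'⟩₁ and ⟨αZ'⟩₁ be arbitrary matrices over 𝔽_p and set ⟨Z'⟩₀ = X'∗Y' − ⟨Z'⟩₁ and ⟨αZ'⟩₀ = α·(X'∗Y') − ⟨αZ'⟩₁.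 Then, after converting back to tensor form, ⟨Z⟩₀ + ⟨Z⟩₁ = Conv(X, Y) and ⟨αZ⟩₀ + ⟨αZ⟩₁ = α·Conv(X, Y); i.e., the protocol π_Ctriple outputs valid authenticated shares of the convolution triple (X, Y, Z = Conv(X,Y)). -/
/-- Multi-channel 2D convolution (Eqn. (7)): `Conv(X,Y)_{(i,j),k'} =
Σ_{Δi,Δj ∈ [−l,l]} Σ_{k} X_{(i+Δi, j+Δj),k} · Y_{(Δi,Δj),k,k'}`, where the input
tensor `X` is defined on all of ℤ × ℤ (out-of-range entries are zero). -/
noncomputable def Conv2d {R : Type*} [CommRing R] (l ci co : ℕ)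
    (X : ℤ → ℤ → Fin ci → R) (Y : ℤ → ℤ → Fin ci → Fin co → R)
    (i j : ℤ) (k' : Fin co) : R :=
  ∑ Δi ∈ Finset.Icc (-(l : ℤ)) l, ∑ Δj ∈ Finset.Icc (-(l : ℤ)) l, ∑ k,
    X (i + Δi) (j + Δj) k * Y Δi Δj k k'

/-! The reshaping `X ↦ X'`, `Y ↦ Y'` (im2col) turns convolution into matrix multiplication:
the entry `(X' * Y') (i, j) k'` is literally the sum defining `Conv2d` with its three index sums
fused into one sum over `Icc × Icc × Fin ci`. Hence `⟨Z'⟩₀ + ⟨Z'⟩₁ = X' * Y'` and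
`⟨αZ'⟩₀ + ⟨αZ'⟩₁ = α • (X' * Y')` reconstruct the convolution and its MAC. -/

open Finset

section Im2col

variable {R : Type*} [CommRing R] (l : ℕ) {ci co : ℕ}

def im2col (X : ℤ → ℤ → Fin ci → R) :
    Matrix (ℤ × ℤ) (Icc (-(l : ℤ)) l × Icc (-(l : ℤ)) l × Fin ci) R :=
  fun ij t => X (ij.1 + t.1) (ij.2 + t.2.1) t.2.2

def kernelMatrix (Y : ℤ → ℤ → Fin ci → Fin co → R) :
    Matrix (Icc (-(l : ℤ)) l × Icc (-(l : ℤ)) l × Fin ci) (Fin co) R :=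
  fun t k' => Y t.1 t.2.1 t.2.2 k'

theorem im2col_mul_kernelMatrix_apply (X : ℤ → ℤ → Fin ci → R)
    (Y : ℤ → ℤ → Fin ci → Fin co → R) (i j : ℤ) (k' : Fin co) :
    (im2col l X * kernelMatrix l Y) (i, j) k' = Conv2d l ci co X Y i j k' := by
  simp only [Matrix.mul_apply, Fintype.sum_prod_type, Conv2d, im2col, kernelMatrix]
  simp only [← sum_coe_sort (Icc (-(l : ℤ)) l)]

end Im2col

theorem stmt_15_general (p : ℕ) (l ci co : ℕ) (α : ZMod p)
    (X : ℤ → ℤ → Fin ci → ZMod p)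
    (Y : ℤ → ℤ → Fin ci → Fin co → ZMod p)
    (X' : Matrix (ℤ × ℤ)
      (↥(Finset.Icc (-(l : ℤ)) l) × ↥(Finset.Icc (-(l : ℤ)) l) × Fin ci) (ZMod p))
    (Y' : Matrix
      (↥(Finset.Icc (-(l : ℤ)) l) × ↥(Finset.Icc (-(l : ℤ)) l) × Fin ci) (Fin co) (ZMod p))
    (hX' : ∀ (ij : ℤ × ℤ) t, X' ij t = X (ij.1 + (t.1 : ℤ)) (ij.2 + (t.2.1 : ℤ)) t.2.2)
    (hY' : ∀ t k', Y' t k' = Y (t.1 : ℤ) (t.2.1 : ℤ) t.2.2 k')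
    (Z'₀ Z'₁ αZ'₀ αZ'₁ : Matrix (ℤ × ℤ) (Fin co) (ZMod p))
    (hZ'₀ : Z'₀ = X' * Y' - Z'₁)
    (hαZ'₀ : αZ'₀ = α • (X' * Y') - αZ'₁) :
    ∀ (i j : ℤ) (k' : Fin co),
      Z'₀ (i, j) k' + Z'₁ (i, j) k' = Conv2d l ci co X Y i j k' ∧
      αZ'₀ (i, j) k' + αZ'₁ (i, j) k' = α * Conv2d l ci co X Y i j k' := by
  have hX'_eq : X' = im2col l X := Matrix.ext hX'
  have hY'_eq : Y' = kernelMatrix l Y := Matrix.ext hY'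
  subst hZ'₀ hαZ'₀ hX'_eq hY'_eq
  intro i j k'
  simp only [Matrix.sub_apply, Matrix.smul_apply, sub_add_cancel, smul_eq_mul,
    im2col_mul_kernelMatrix_apply, and_self]

/-- Correctness of π_Ctriple: with `X = X₀+X₁`, `Y = Y₀+Y₁`, reshaped matrices
`X'_{(i,j),(Δi,Δj,k)} = X_{(i+Δi,j+Δj),k}`, `Y'_{(Δi,Δj,k),k'} = Y_{(Δi,Δj),k,k'}`,
and shares `⟨Z'⟩₀ = X'∗Y' − ⟨Z'⟩₁`, `⟨αZ'⟩₀ = α·(X'∗Y') − ⟨αZ'⟩₁`, the shares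
reconstruct (in tensor form) `Conv(X,Y)` and `α·Conv(X,Y)` respectively. -/
theorem stmt_15 (p : ℕ) [Fact p.Prime] (l ci co : ℕ) (α : ZMod p)
    (X₀ X₁ X : ℤ → ℤ → Fin ci → ZMod p)
    (Y₀ Y₁ Y : ℤ → ℤ → Fin ci → Fin co → ZMod p)
    (hX : X = X₀ + X₁) (hY : Y = Y₀ + Y₁)
    (X' : Matrix (ℤ × ℤ)
      (↥(Finset.Icc (-(l : ℤ)) l) × ↥(Finset.Icc (-(l : ℤ)) l) × Fin ci) (ZMod p))
    (Y' : Matrix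
      (↥(Finset.Icc (-(l : ℤ)) l) × ↥(Finset.Icc (-(l : ℤ)) l) × Fin ci) (Fin co) (ZMod p))
    (hX' : ∀ (ij : ℤ × ℤ) t, X' ij t = X (ij.1 + (t.1 : ℤ)) (ij.2 + (t.2.1 : ℤ)) t.2.2)
    (hY' : ∀ t k', Y' t k' = Y (t.1 : ℤ) (t.2.1 : ℤ) t.2.2 k')
    (Z'₀ Z'₁ αZ'₀ αZ'₁ : Matrix (ℤ × ℤ) (Fin co) (ZMod p))
    (hZ'₀ : Z'₀ = X' * Y' - Z'₁)
    (hαZ'₀ : αZ'₀ = α • (X' * Y') - αZ'₁) :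
    ∀ (i j : ℤ) (k' : Fin co),
      Z'₀ (i, j) k' + Z'₁ (i, j) k' = Conv2d l ci co X Y i j k' ∧
      αZ'₀ (i, j) k' + αZ'₁ (i, j) k' = α * Conv2d l ci co X Y i j k' :=
  stmt_15_general p l ci co α X Y X' Y' hX' hY' Z'₀ Z'₁ αZ'₀ αZ'₁ hZ'₀ hαZ'₀
end
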